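/- arXiv:1507.02772 — 4 statements merged into one kernel-verified Lean document; each statement's English description precedes it below -/
import Mathlib

section
/- Let B₁,…,Bₙ and X be d×d symmetric positive definite matrices. The function φ(α) = ‖Log(X^{-1/2} (Σᵢ αᵢ Bᵢ) X^{-1/2})‖_F² is convex on the set 𝒜 = {α ∈ ℝⁿ : αᵢ ≥ 0 for all i, and Σᵢ αᵢ Bᵢ ⪯ X (Löwner order), with Σᵢ αᵢ Bᵢ positive definite}. -/
open Matrix

noncomputable def mlog {d : ℕ} (A : Matrix (Fin d) (Fin d) ℝ) : Matrix (Fin d) (Fin d) ℝ :=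
  cfc Real.log A

noncomputable def msqrt {d : ℕ} (A : Matrix (Fin d) (Fin d) ℝ) : Matrix (Fin d) (Fin d) ℝ :=
  cfc Real.sqrt A

noncomputable def fnorm {d : ℕ} (A : Matrix (Fin d) (Fin d) ℝ) : ℝ :=
  Real.sqrt (Matrix.trace (Aᵀ * A))

noncomputable def riemDist {d : ℕ} (X Y : Matrix (Fin d) (Fin d) ℝ) : ℝ :=
  fnorm (mlog ((msqrt X)⁻¹ * Y * (msqrt X)⁻¹))

/-!
Put `Y = X^{-1/2}` and `M(α) = Y (∑ αᵢ Bᵢ) Y`. Since `Log M` is symmetric,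
`‖Log M‖_F² = tr (Log M)² = tr g(M)` with `g = log²`, so the function is `tr g ∘ M` with `M`
linear. On `𝒜` the matrix `M(α)` is positive definite with `M(α) ⪯ 1`, so its spectrum lies in
`(0, 1]`, where `g = (-log)²` is convex as the square of a nonnegative convex function.

It remains to see that `A ↦ tr g(A)` is convex on symmetric matrices with spectrum in a set where
`g` is convex (Peierls). Expanding `u` in an eigenbasis of `A` shows that `⟪u, A u⟫` is a convex
combination of eigenvalues of `A` and gives Jensen's inequality `g ⟪u, A u⟫ ≤ ⟪u, g(A) u⟫` for unit
`u`. Computing `tr g(a A + b B)` in an orthonormal eigenbasis `(vᵢ)` of `a A + b B`, each term is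
`g (a ⟪vᵢ, A vᵢ⟫ + b ⟪vᵢ, B vᵢ⟫) ≤ a ⟪vᵢ, g(A) vᵢ⟫ + b ⟪vᵢ, g(B) vᵢ⟫`, and summing over `i` gives
`a tr g(A) + b tr g(B)`.
-/

namespace Matrix.IsHermitian

variable {ι : Type*} [Fintype ι] [DecidableEq ι] {A : Matrix ι ι ℝ} (hA : A.IsHermitian)
include hA

lemma dotProduct_eigenvectorBasis_self (i : ι) :
    ⇑(hA.eigenvectorBasis i) ⬝ᵥ ⇑(hA.eigenvectorBasis i) = 1 := by
  have h := orthonormal_iff_ite.mp hA.eigenvectorBasis.orthonormal i i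
  rwa [if_pos rfl, EuclideanSpace.inner_eq_star_dotProduct, star_trivial] at h

lemma sum_dotProduct_eigenvectorBasis_mul (x y : ι → ℝ) :
    ∑ j, (x ⬝ᵥ hA.eigenvectorBasis j) * (hA.eigenvectorBasis j ⬝ᵥ y) = x ⬝ᵥ y := by
  simpa [EuclideanSpace.inner_eq_star_dotProduct, dotProduct_comm, mul_comm] using
    hA.eigenvectorBasis.sum_inner_mul_inner (WithLp.toLp 2 x) (WithLp.toLp 2 y)

lemma cfc_mulVec_eigenvectorBasis (g : ℝ → ℝ) (j : ι) :
    cfc g A *ᵥ hA.eigenvectorBasis j = g (hA.eigenvalues j) • ⇑(hA.eigenvectorBasis j) := by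
  rw [hA.cfc_eq, IsHermitian.cfc, Unitary.conjStarAlgAut_apply, ← mulVec_mulVec, ← mulVec_mulVec,
    star_eigenvectorUnitary_mulVec, mulVec_single_one, col_diagonal]
  rw [show Pi.single j _ = g (hA.eigenvalues j) • Pi.single j (1 : ℝ) by
    rw [← Pi.single_smul', smul_eq_mul, mul_one]; rfl, mulVec_smul, eigenvectorUnitary_mulVec]

lemma eigenvalues_eq_dotProduct_mulVec (i : ι) :
    hA.eigenvalues i = hA.eigenvectorBasis i ⬝ᵥ (A *ᵥ hA.eigenvectorBasis i) := by
  rw [hA.mulVec_eigenvectorBasis, dotProduct_smul, hA.dotProduct_eigenvectorBasis_self, smul_eq_mul,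
    mul_one]

lemma dotProduct_cfc_mulVec (g : ℝ → ℝ) (u : ι → ℝ) :
    u ⬝ᵥ (cfc g A *ᵥ u) = ∑ j, (hA.eigenvectorBasis j ⬝ᵥ u) ^ 2 * g (hA.eigenvalues j) := by
  rw [← hA.sum_dotProduct_eigenvectorBasis_mul]
  refine Finset.sum_congr rfl fun j _ => ?_
  have hsymm : (cfc g A)ᵀ = cfc g A := (cfc_predicate g A).isHermitian.eq
  rw [dotProduct_mulVec, ← mulVec_transpose, hsymm, hA.cfc_mulVec_eigenvectorBasis, smul_dotProduct,
    dotProduct_comm u, smul_eq_mul]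
  ring

lemma sum_sq_dotProduct_eigenvectorBasis (u : ι → ℝ) :
    ∑ j, (hA.eigenvectorBasis j ⬝ᵥ u) ^ 2 = u ⬝ᵥ u := by
  simpa [dotProduct_comm, sq] using hA.sum_dotProduct_eigenvectorBasis_mul u u

lemma dotProduct_mulVec_eq_sum (u : ι → ℝ) :
    u ⬝ᵥ (A *ᵥ u) = ∑ j, (hA.eigenvectorBasis j ⬝ᵥ u) ^ 2 * hA.eigenvalues j := by
  simpa only [cfc_id' ℝ A] using hA.dotProduct_cfc_mulVec (fun x => x) u

lemma trace_eq_sum_dotProduct_mulVec (M : Matrix ι ι ℝ) :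
    M.trace = ∑ i, ⇑(hA.eigenvectorBasis i) ⬝ᵥ (M *ᵥ hA.eigenvectorBasis i) := by
  rw [← M.trace_toLin_eq (PiLp.basisFun 2 ℝ ι), ← toLpLin_eq_toLin,
    LinearMap.trace_eq_sum_inner _ hA.eigenvectorBasis]
  simp [EuclideanSpace.inner_eq_star_dotProduct, dotProduct_comm, toLpLin_apply]

lemma trace_cfc (g : ℝ → ℝ) : (cfc g A).trace = ∑ i, g (hA.eigenvalues i) := by
  simp only [hA.trace_eq_sum_dotProduct_mulVec, hA.cfc_mulVec_eigenvectorBasis, dotProduct_smul,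
    hA.dotProduct_eigenvectorBasis_self, smul_eq_mul, mul_one]

variable {u : ι → ℝ} (hu : u ⬝ᵥ u = 1)
include hu

lemma dotProduct_mulVec_mem {s : Set ℝ} (hs : Convex ℝ s) (hAs : spectrum ℝ A ⊆ s) :
    u ⬝ᵥ (A *ᵥ u) ∈ s := by
  rw [hA.dotProduct_mulVec_eq_sum]
  exact hs.sum_mem (fun j _ => sq_nonneg _) (by rw [hA.sum_sq_dotProduct_eigenvectorBasis, hu])
    fun j _ => hAs (hA.eigenvalues_mem_spectrum_real j)

lemma _root_.ConvexOn.map_dotProduct_mulVec_le {s : Set ℝ} {g : ℝ → ℝ} (hg : ConvexOn ℝ s g)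
    (hAs : spectrum ℝ A ⊆ s) :
    g (u ⬝ᵥ (A *ᵥ u)) ≤ u ⬝ᵥ (cfc g A *ᵥ u) := by
  rw [hA.dotProduct_mulVec_eq_sum, hA.dotProduct_cfc_mulVec]
  exact hg.map_sum_le (fun j _ => sq_nonneg _)
    (by rw [hA.sum_sq_dotProduct_eigenvectorBasis, hu])
    fun j _ => hAs (hA.eigenvalues_mem_spectrum_real j)

end Matrix.IsHermitian

namespace Matrix

theorem convexOn_trace_cfc {ι : Type*} [Fintype ι] [DecidableEq ι] {s : Set ℝ} {g : ℝ → ℝ}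
    (hg : ConvexOn ℝ s g) :
    ConvexOn ℝ {A : Matrix ι ι ℝ | A.IsHermitian ∧ spectrum ℝ A ⊆ s}
      (fun A => (cfc g A).trace) := by
  suffices ∀ ⦃A : Matrix ι ι ℝ⦄, A.IsHermitian ∧ spectrum ℝ A ⊆ s →
      ∀ ⦃B : Matrix ι ι ℝ⦄, B.IsHermitian ∧ spectrum ℝ B ⊆ s →
      ∀ ⦃a b : ℝ⦄, 0 ≤ a → 0 ≤ b → a + b = 1 →
      ((a • A + b • B).IsHermitian ∧ spectrum ℝ (a • A + b • B) ⊆ s) ∧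
        (cfc g (a • A + b • B)).trace ≤ a • (cfc g A).trace + b • (cfc g B).trace from
    ⟨fun A hA B hB a b ha hb hab => (this hA hB ha hb hab).1,
      fun A hA B hB a b ha hb hab => (this hA hB ha hb hab).2⟩
  rintro A ⟨hA, hAs⟩ B ⟨hB, hBs⟩ a b ha hb hab
  have hC : (a • A + b • B).IsHermitian :=
    ((IsSelfAdjoint.all a).smul hA).add ((IsSelfAdjoint.all b).smul hB)
  set v := hC.eigenvectorBasis
  have hv : ∀ i, ⇑(v i) ⬝ᵥ ⇑(v i) = 1 := hC.dotProduct_eigenvectorBasis_self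
  have heig : ∀ i, hC.eigenvalues i = a * (v i ⬝ᵥ (A *ᵥ v i)) + b * (v i ⬝ᵥ (B *ᵥ v i)) := by
    intro i
    rw [hC.eigenvalues_eq_dotProduct_mulVec, add_mulVec, smul_mulVec, smul_mulVec, dotProduct_add,
      dotProduct_smul, dotProduct_smul, smul_eq_mul, smul_eq_mul]
  refine ⟨⟨hC, ?_⟩, ?_⟩
  · rw [hC.spectrum_real_eq_range_eigenvalues, Set.range_subset_iff]
    intro i
    rw [heig]
    exact hg.1 (hA.dotProduct_mulVec_mem (hv i) hg.1 hAs) (hB.dotProduct_mulVec_mem (hv i) hg.1 hBs)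
      ha hb hab
  calc (cfc g (a • A + b • B)).trace
      = ∑ i, g (hC.eigenvalues i) := hC.trace_cfc g
    _ ≤ ∑ i, (a * g (v i ⬝ᵥ (A *ᵥ v i)) + b * g (v i ⬝ᵥ (B *ᵥ v i))) := by
      refine Finset.sum_le_sum fun i _ => ?_
      rw [heig]
      exact hg.2 (hA.dotProduct_mulVec_mem (hv i) hg.1 hAs)
        (hB.dotProduct_mulVec_mem (hv i) hg.1 hBs) ha hb hab
    _ ≤ ∑ i, (a * (v i ⬝ᵥ (cfc g A *ᵥ v i)) + b * (v i ⬝ᵥ (cfc g B *ᵥ v i))) := by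
      gcongr with i
      · exact hg.map_dotProduct_mulVec_le hA (hv i) hAs
      · exact hg.map_dotProduct_mulVec_le hB (hv i) hBs
    _ = a • (cfc g A).trace + b • (cfc g B).trace := by
      rw [hC.trace_eq_sum_dotProduct_mulVec (cfc g A), hC.trace_eq_sum_dotProduct_mulVec (cfc g B),
        Finset.sum_add_distrib, smul_eq_mul, smul_eq_mul, Finset.mul_sum, Finset.mul_sum]

lemma convex_setOf_posDef {ι : Type*} [Fintype ι] :
    Convex ℝ {A : Matrix ι ι ℝ | A.PosDef} := by
  intro A hA B hB a b ha hb hab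
  rcases ha.eq_or_lt with rfl | ha
  · simpa [show b = 1 by linarith] using hB
  · exact (hA.smul ha).add_posSemidef (hB.posSemidef.smul hb)

lemma convex_setOf_posSemidef_sub {ι : Type*} [Fintype ι] (X : Matrix ι ι ℝ) :
    Convex ℝ {A : Matrix ι ι ℝ | (X - A).PosSemidef} := by
  intro A hA B hB a b ha hb hab
  have h : X - (a • A + b • B) = a • (X - A) + b • (X - B) := by
    rw [smul_sub, smul_sub, sub_add_sub_comm, ← add_smul, hab, one_smul]
  simpa only [Set.mem_ofPred_eq, h] using (hA.smul ha).add (hB.smul hb)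

lemma PosDef.spectrum_subset_Ioc {ι : Type*} [Fintype ι] [DecidableEq ι] {M : Matrix ι ι ℝ}
    (hM : M.PosDef) (h1 : (1 - M).PosSemidef) : spectrum ℝ M ⊆ Set.Ioc 0 1 := by
  rw [hM.1.spectrum_real_eq_range_eigenvalues, Set.range_subset_iff]
  intro i
  refine ⟨hM.eigenvalues_pos i, ?_⟩
  have h := h1.dotProduct_mulVec_nonneg (hM.1.eigenvectorBasis i)
  rw [star_trivial, sub_mulVec, one_mulVec, dotProduct_sub, hM.1.dotProduct_eigenvectorBasis_self,
    ← hM.1.eigenvalues_eq_dotProduct_mulVec] at h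
  linarith

end Matrix

theorem convexOn_log_sq_Ioc : ConvexOn ℝ (Set.Ioc 0 1) (fun t => Real.log t ^ 2) := by
  have h := (strictConcaveOn_log_Ioi.concaveOn.neg.subset Set.Ioc_subset_Ioi_self
    (convex_Ioc 0 1)).pow (fun t ht => neg_nonneg.2 (Real.log_nonpos ht.1.le ht.2)) 2
  exact h.congr fun t _ => neg_sq (Real.log t)

section
variable {d : ℕ} {X S : Matrix (Fin d) (Fin d) ℝ}

lemma sq_fnorm (A : Matrix (Fin d) (Fin d) ℝ) : fnorm A ^ 2 = (Aᵀ * A).trace :=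
  Real.sq_sqrt (posSemidef_conjTranspose_mul_self A).trace_nonneg

lemma sq_fnorm_mlog (A : Matrix (Fin d) (Fin d) ℝ) :
    fnorm (mlog A) ^ 2 = (cfc (fun t => Real.log t ^ 2) A).trace := by
  have hfin := A.finite_real_spectrum
  have hsymm : (mlog A)ᵀ = mlog A := IsSymm.eq (cfc_predicate Real.log A)
  rw [sq_fnorm, hsymm, mlog, ← cfc_mul _ _ A (hfin.continuousOn _) (hfin.continuousOn _)]
  simp only [sq]

lemma isHermitian_msqrt (X : Matrix (Fin d) (Fin d) ℝ) : (msqrt X).IsHermitian :=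
  cfc_predicate Real.sqrt X

lemma msqrt_mul_self (hX : X.PosSemidef) : msqrt X * msqrt X = X := by
  have hfin := X.finite_real_spectrum
  have hnonneg := (posSemidef_iff_isHermitian_and_spectrum_nonneg.1 hX).2
  rw [msqrt, ← cfc_mul _ _ X (hfin.continuousOn _) (hfin.continuousOn _),
    cfc_congr fun x hx => Real.mul_self_sqrt (hnonneg hx)]
  exact cfc_id' ℝ X hX.1

lemma isUnit_msqrt (hX : X.PosDef) : IsUnit (msqrt X) :=
  isUnit_of_mul_isUnit_right (msqrt_mul_self hX.posSemidef ▸ hX.isUnit)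

lemma inv_msqrt_mul_mul_inv_msqrt (hX : X.PosDef) : (msqrt X)⁻¹ * X * (msqrt X)⁻¹ = 1 := by
  have hdet := (isUnit_iff_isUnit_det _).1 (isUnit_msqrt hX)
  have hsq := msqrt_mul_self hX.posSemidef
  set P := msqrt X
  rw [← hsq, ← Matrix.mul_assoc, nonsing_inv_mul _ hdet, Matrix.one_mul, mul_nonsing_inv _ hdet]

lemma posDef_inv_msqrt_mul_mul_inv_msqrt (hX : X.PosDef) (hS : S.PosDef) :
    ((msqrt X)⁻¹ * S * (msqrt X)⁻¹).PosDef := by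
  simpa only [(isHermitian_msqrt X).inv.eq] using hS.conjTranspose_mul_mul_same
    (mulVec_injective_of_isUnit (isUnit_nonsing_inv_iff.2 (isUnit_msqrt hX)))

lemma posSemidef_one_sub_inv_msqrt_mul_mul_inv_msqrt (hX : X.PosDef) (hSX : (X - S).PosSemidef) :
    (1 - (msqrt X)⁻¹ * S * (msqrt X)⁻¹).PosSemidef := by
  have h := hSX.conjTranspose_mul_mul_same (msqrt X)⁻¹
  rwa [(isHermitian_msqrt X).inv.eq, Matrix.mul_sub, Matrix.sub_mul,
    inv_msqrt_mul_mul_inv_msqrt hX] at h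

end

theorem stmt_5_general {d n : ℕ} (B : Fin n → Matrix (Fin d) (Fin d) ℝ)
    (X : Matrix (Fin d) (Fin d) ℝ)
    (hX : X.PosDef) :
    ConvexOn ℝ
      {α : Fin n → ℝ | (∀ i, 0 ≤ α i) ∧
        (X - ∑ i, α i • B i).PosSemidef ∧ (∑ i, α i • B i).PosDef}
      (fun α => (fnorm (mlog ((msqrt X)⁻¹ * (∑ i, α i • B i) * (msqrt X)⁻¹)))^2) := by
  let S := Fintype.linearCombination ℝ B
  let L := LinearMap.mulRight ℝ (msqrt X)⁻¹ ∘ₗ LinearMap.mulLeft ℝ (msqrt X)⁻¹ ∘ₗ S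
  have hφ := (convexOn_trace_cfc convexOn_log_sq_Ioc).comp_linearMap L
  refine (hφ.subset ?_ ?_).congr fun α _ => (sq_fnorm_mlog _).symm
  · rintro α ⟨-, hSX, hS⟩
    have hM := posDef_inv_msqrt_mul_mul_inv_msqrt hX hS
    exact ⟨hM.1, hM.spectrum_subset_Ioc (posSemidef_one_sub_inv_msqrt_mul_mul_inv_msqrt hX hSX)⟩
  · exact (convex_Ici 0).inter (((convex_setOf_posSemidef_sub X).linear_preimage S).inter
      (convex_setOf_posDef.linear_preimage S))

theorem stmt_5 {d n : ℕ} (B : Fin n → Matrix (Fin d) (Fin d) ℝ)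
    (X : Matrix (Fin d) (Fin d) ℝ)
    (hB : ∀ i, (B i).PosDef) (hX : X.PosDef) :
    ConvexOn ℝ
      {α : Fin n → ℝ | (∀ i, 0 ≤ α i) ∧
        (X - ∑ i, α i • B i).PosSemidef ∧ (∑ i, α i • B i).PosDef}
      (fun α => (fnorm (mlog ((msqrt X)⁻¹ * (∑ i, α i • B i) * (msqrt X)⁻¹)))^2) :=
  stmt_5_general B X hX
end

section
/- The matrix logarithm is operator monotone on positive definite matrices: if A, B are symmetric positive definite d×d matrices with A ⪯ B, then Log(A) ⪯ Log(B). -/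
open Matrix

/-!
The logarithm is operator monotone on the strictly positive elements of any complex
C⋆-algebra (`CFC.log_le_log`), in particular on complex matrices with the L² operator norm. Real matrices embed into complex matrices by a continuous
star-algebra homomorphism; it preserves the Löwner order and strict positivity, commutes with the
continuous functional calculus, and reflects positive semidefiniteness, so the real statement is
the complex one read back through this embedding.
-/

open scoped MatrixOrder Matrix.Norms.L2Operator ComplexOrder

namespace Matrix

variable {n : Type*} [Fintype n]

lemma PosSemidef.of_map_ofReal {M : Matrix n n ℝ} (h : (M.map ((↑) : ℝ → ℂ)).PosSemidef) :
    M.PosSemidef := by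
  refine .of_dotProduct_mulVec_nonneg ?_ fun x => ?_
  · exact (isHermitian_map_iff (fun _ => by simp) Complex.ofReal_injective).mp h.1
  · have key : star ((↑) ∘ x : n → ℂ) ⬝ᵥ M.map (↑) *ᵥ ((↑) ∘ x)
        = ((star x ⬝ᵥ M *ᵥ x : ℝ) : ℂ) := by
      simp [dotProduct, mulVec]
    exact Complex.zero_le_real.mp (key ▸ h.dotProduct_mulVec_nonneg _)

variable [DecidableEq n]

noncomputable def ofRealStarAlgHom : Matrix n n ℝ →⋆ₐ[ℝ] Matrix n n ℂ :=
  { (Algebra.ofId ℝ ℂ).mapMatrix with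
    map_star' := fun M => by
      ext i j
      simp [Algebra.ofId_apply] }

lemma ofRealStarAlgHom_apply (M : Matrix n n ℝ) : ofRealStarAlgHom M = M.map (↑) := rfl

lemma continuous_ofRealStarAlgHom : Continuous (ofRealStarAlgHom (n := n)) :=
  LinearMap.continuous_of_finiteDimensional ofRealStarAlgHom.toLinearMap

lemma ofRealStarAlgHom_cfc (f : ℝ → ℝ) {A : Matrix n n ℝ} (hA : A.IsHermitian)
    (hf : ContinuousOn f (spectrum ℝ A)) :
    ofRealStarAlgHom (cfc f A) = cfc f (ofRealStarAlgHom A) :=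
  StarAlgHom.map_cfc _ f A hf continuous_ofRealStarAlgHom hA (hA.map _ fun _ => by simp)

lemma IsStrictlyPositive.ofRealStarAlgHom {A : Matrix n n ℝ} (hA : IsStrictlyPositive A) :
    IsStrictlyPositive (ofRealStarAlgHom A) :=
  (hA.isUnit.map _).isStrictlyPositive (map_nonneg _ hA.nonneg)

lemma ofRealStarAlgHom_cfc_log {A : Matrix n n ℝ} (hA : IsStrictlyPositive A) :
    ofRealStarAlgHom (cfc Real.log A) = CFC.log (ofRealStarAlgHom A) :=
  ofRealStarAlgHom_cfc _ hA.isSelfAdjoint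
    (Real.continuousOn_log.mono fun _ hx => (hA.spectrum_pos hx).ne')

end Matrix

theorem stmt_7_general {d : ℕ} (A B : Matrix (Fin d) (Fin d) ℝ)
    (hA : A.PosDef) (hAB : (B - A).PosSemidef) :
    (mlog B - mlog A).PosSemidef := by
  have hA' : IsStrictlyPositive A := hA.isStrictlyPositive
  have hB' : IsStrictlyPositive B := by
    simpa using (hA.add_posSemidef hAB).isStrictlyPositive
  refine PosSemidef.of_map_ofReal ?_
  rw [← ofRealStarAlgHom_apply, map_sub, mlog, mlog, ofRealStarAlgHom_cfc_log hA',
    ofRealStarAlgHom_cfc_log hB', ← le_iff]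
  exact CFC.log_le_log (OrderHomClass.mono _ hAB) hA'.ofRealStarAlgHom

theorem stmt_7 {d : ℕ} (A B : Matrix (Fin d) (Fin d) ℝ)
    (hA : A.PosDef) (hB : B.PosDef) (hAB : (B - A).PosSemidef) :
    (mlog B - mlog A).PosSemidef :=
  stmt_7_general A B hA hAB
end

section
/- For d×d symmetric positive definite matrices X and Y, the Burg (log-determinant) divergence d_burg(X,Y) = trace(XY^{-1}) − log det(XY^{-1}) − d is nonnegative, and equals zero if and only if X = Y. -/
open Matrix

/-!
Write `Y = Bᴴ B` with `B` invertible. Then `X Y⁻¹` has the same trace and determinant as the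
positive definite matrix `M = B⁻ᴴ X B⁻¹`, so the divergence equals `∑ (λᵢ - log λᵢ - 1)` over the
eigenvalues `λᵢ > 0` of `M`. Each term is nonnegative since `log λ ≤ λ - 1`, with equality only at
`λ = 1`; and all eigenvalues equal `1` exactly when `M = 1`, i.e. `X = Y`.
-/

namespace Matrix

variable {n : Type*} [Fintype n] [DecidableEq n]

section Congruence

variable {R : Type*} [CommRing R] [StarRing R]

lemma trace_mul_inv_conjTranspose_mul_self (X B : Matrix n n R) :
    trace (X * (Bᴴ * B)⁻¹) = trace ((B⁻¹)ᴴ * X * B⁻¹) := by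
  rw [Matrix.mul_inv_rev, ← conjTranspose_nonsing_inv, ← Matrix.mul_assoc, trace_mul_cycle]

lemma det_mul_inv_conjTranspose_mul_self (X B : Matrix n n R) :
    det (X * (Bᴴ * B)⁻¹) = det ((B⁻¹)ᴴ * X * B⁻¹) := by
  simp only [Matrix.mul_inv_rev, det_mul, conjTranspose_nonsing_inv]
  ring

lemma conjTranspose_inv_mul_mul_inv_eq_one_iff {X B : Matrix n n R} (hB : IsUnit B) :
    (B⁻¹)ᴴ * X * B⁻¹ = 1 ↔ X = Bᴴ * B := by
  have hBB' := mul_nonsing_inv B ((isUnit_iff_isUnit_det B).mp hB)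
  have hB'B := nonsing_inv_mul B ((isUnit_iff_isUnit_det B).mp hB)
  constructor
  · intro h
    calc X = (B⁻¹ * B)ᴴ * X * (B⁻¹ * B) := by
          rw [hB'B, conjTranspose_one, Matrix.one_mul, Matrix.mul_one]
      _ = Bᴴ * ((B⁻¹)ᴴ * X * B⁻¹) * B := by simp only [conjTranspose_mul, Matrix.mul_assoc]
      _ = Bᴴ * B := by rw [h, Matrix.mul_one]
  · rintro rfl
    rw [Matrix.mul_assoc, Matrix.mul_assoc, hBB', Matrix.mul_one, ← conjTranspose_mul, hBB',
      conjTranspose_one]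

end Congruence

lemma IsHermitian.eq_one_of_eigenvalues_eq_one {𝕜 : Type*} [RCLike 𝕜] {A : Matrix n n 𝕜}
    (hA : A.IsHermitian) (h : ∀ i, hA.eigenvalues i = 1) : A = 1 := by
  have hdiag : diagonal (RCLike.ofReal ∘ hA.eigenvalues) = (1 : Matrix n n 𝕜) := by
    rw [← diagonal_one]
    congr 1
    funext i
    simp [h i]
  rw [hA.spectral_theorem, hdiag, map_one]

namespace PosDef

variable {A : Matrix n n ℝ}

lemma trace_sub_log_det_sub_card_eq_sum (hA : A.PosDef) :
    A.trace - Real.log A.det - Fintype.card n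
      = ∑ i, (hA.1.eigenvalues i - Real.log (hA.1.eigenvalues i) - 1) := by
  rw [hA.1.trace_eq_sum_eigenvalues, hA.1.det_eq_prod_eigenvalues]
  simp only [RCLike.ofReal_real_eq_id, id]
  rw [Real.log_prod fun i _ ↦ (hA.eigenvalues_pos i).ne']
  simp [Finset.sum_sub_distrib]

lemma sub_log_sub_one_eigenvalues_nonneg (hA : A.PosDef) (i : n) :
    0 ≤ hA.1.eigenvalues i - Real.log (hA.1.eigenvalues i) - 1 := by
  linarith [Real.log_le_sub_one_of_pos (hA.eigenvalues_pos i)]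

lemma trace_sub_log_det_sub_card_nonneg (hA : A.PosDef) :
    0 ≤ A.trace - Real.log A.det - Fintype.card n := by
  rw [hA.trace_sub_log_det_sub_card_eq_sum]
  exact Finset.sum_nonneg fun i _ ↦ hA.sub_log_sub_one_eigenvalues_nonneg i

lemma trace_sub_log_det_sub_card_eq_zero_iff (hA : A.PosDef) :
    A.trace - Real.log A.det - Fintype.card n = 0 ↔ A = 1 := by
  refine ⟨fun h0 ↦ hA.1.eq_one_of_eigenvalues_eq_one fun i ↦ ?_, fun h1 ↦ by simp [h1]⟩
  rw [hA.trace_sub_log_det_sub_card_eq_sum, Finset.sum_eq_zero_iff_of_nonneg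
    fun i _ ↦ hA.sub_log_sub_one_eigenvalues_nonneg i] at h0
  by_contra hne
  linarith [Real.log_lt_sub_one_of_pos (hA.eigenvalues_pos i) hne, h0 i (Finset.mem_univ i)]

end PosDef

end Matrix

open scoped MatrixOrder in
theorem stmt_13 {d : ℕ} (X Y : Matrix (Fin d) (Fin d) ℝ)
    (hX : X.PosDef) (hY : Y.PosDef) :
    0 ≤ Matrix.trace (X * Y⁻¹) - Real.log ((X * Y⁻¹).det) - d ∧
    (Matrix.trace (X * Y⁻¹) - Real.log ((X * Y⁻¹).det) - d = 0 ↔ X = Y) := by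
  obtain ⟨B, hB, rfl⟩ :=
    CStarAlgebra.isStrictlyPositive_iff_eq_star_mul_self.mp hY.isStrictlyPositive
  rw [star_eq_conjTranspose]
  have hM : ((B⁻¹)ᴴ * X * B⁻¹).PosDef :=
    hX.conjTranspose_mul_mul_same (mulVec_injective_of_isUnit ((isUnit_nonsing_inv_iff).mpr hB))
  rw [trace_mul_inv_conjTranspose_mul_self, det_mul_inv_conjTranspose_mul_self,
    ← conjTranspose_inv_mul_mul_inv_eq_one_iff hB]
  simpa only [Fintype.card_fin] using
    And.intro hM.trace_sub_log_det_sub_card_nonneg hM.trace_sub_log_det_sub_card_eq_zero_iff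
end

section
/- Let φ(α) = ½‖Log(Σᵢ αᵢ S Bᵢ S)‖_F² + λ Σᵢ αᵢ with S, B₁,…,Bₙ symmetric positive definite and λ ≥ 0 and α in the open set where M(α) = Σᵢ αᵢ Bᵢ is positive definite. Then the partial derivative ∂φ/∂α_p = trace(Log(S M(α) S)(S M(α) S)^{-1} S B_p S) + λ. -/
open Matrix

/-!
Along the coordinate line, `S M(α) S` is an affine path `A + t • C` with `C = S B_p S`. Since
`Log X` is symmetric, `½‖Log X‖_F² = tr h(X)` with `h = ½ log²`, so the claim is
`d/dt tr h(A + t C) = tr (h'(A + t C) C)` with `h'(x) = log x / x`, i.e. `h'(X) = Log X · X⁻¹`.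
For polynomial `h` this is the product rule plus cyclicity of the trace. In general, the spectra
of `A + t C` stay in a compact `[a, b] ⊂ (0, ∞)` for `t` near `t₀`; integrating Weierstrass
approximations of `h'` on `[a, b]` gives polynomials `p_m → h` with `p_m' → h'` uniformly there.
As `‖g(X)‖ ≤ sup_{σ(X)} |g|` in the operator norm, `tr (p_m'(A + t C) C)` converges uniformly
near `t₀`, and the limit can be differentiated termwise.
-/

open Polynomial Filter Topology Set

lemma Polynomial.exists_derivative_eq {K : Type*} [Field K] [CharZero K] (q : K[X]) :
    ∃ P : K[X], derivative P = q := by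
  induction q using Polynomial.induction_on' with
  | add p q hp hq =>
    obtain ⟨P, rfl⟩ := hp
    obtain ⟨Q, rfl⟩ := hq
    exact ⟨P + Q, derivative_add⟩
  | monomial k a =>
    refine ⟨monomial (k + 1) (a / (k + 1)), ?_⟩
    rw [derivative_monomial, Nat.add_sub_cancel]
    congr 1
    push_cast
    field_simp

theorem exists_polynomial_near_of_hasDerivWithinAt {a b ε : ℝ} {f f' : ℝ → ℝ}
    (hf : ∀ x ∈ Icc a b, HasDerivWithinAt f (f' x) (Icc a b) x)
    (hf' : ContinuousOn f' (Icc a b)) (hε : 0 < ε) :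
    ∃ P : ℝ[X], ∀ x ∈ Icc a b, |P.eval x - f x| < ε ∧ |P.derivative.eval x - f' x| < ε := by
  set δ := ε / (|b - a| + 1)
  have hδ : 0 < δ := by positivity
  have hδε : δ ≤ ε := div_le_self hε.le (by linarith [abs_nonneg (b - a)])
  obtain ⟨q, hq⟩ := exists_polynomial_near_of_continuousOn a b f' hf' δ hδ
  obtain ⟨Q, hQ⟩ := q.exists_derivative_eq
  set P := Q + C (f a - Q.eval a)
  have hP' : derivative P = q := by simp [P, hQ]
  refine ⟨P, fun x hx => ⟨?_, hP' ▸ (hq x hx).trans_le hδε⟩⟩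
  -- the error `P - f` vanishes at `a` and has derivative smaller than `δ` on `[a, b]`
  have hmvt := norm_image_sub_le_of_norm_deriv_le_segment' (f := fun x => P.eval x - f x)
    (fun x hx => ((P.hasDerivAt x).hasDerivWithinAt.sub (hf x hx)))
    (fun x hx => by simpa [hP'] using (hq x (Ico_subset_Icc_self hx)).le) x hx
  simp only [P, eval_add, eval_C, Real.norm_eq_abs] at hmvt ⊢
  calc |Q.eval x + (f a - Q.eval a) - f x| ≤ δ * (x - a) := by simpa using hmvt
    _ ≤ δ * |b - a| := by gcongr; rw [abs_of_nonneg] <;> linarith [hx.1, hx.2]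
    _ < ε := by
      rw [div_mul_eq_mul_div, div_lt_iff₀ (by positivity)]
      nlinarith [abs_nonneg (b - a)]

theorem exists_polynomial_tendstoUniformlyOn {a b : ℝ} {f f' : ℝ → ℝ}
    (hf : ∀ x ∈ Icc a b, HasDerivWithinAt f (f' x) (Icc a b) x)
    (hf' : ContinuousOn f' (Icc a b)) :
    ∃ P : ℕ → ℝ[X], TendstoUniformlyOn (fun m x => (P m).eval x) f atTop (Icc a b) ∧
      TendstoUniformlyOn (fun m x => (P m).derivative.eval x) f' atTop (Icc a b) := by
  choose P hP using fun m : ℕ =>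
    exists_polynomial_near_of_hasDerivWithinAt hf hf' (Nat.one_div_pos_of_nat (n := m))
  have hsmall (ε : ℝ) (hε : 0 < ε) : ∀ᶠ m : ℕ in atTop, 1 / ((m : ℝ) + 1) < ε :=
    tendsto_one_div_add_atTop_nhds_zero_nat.eventually (eventually_lt_nhds hε)
  refine ⟨P, ?_, ?_⟩ <;> refine Metric.tendstoUniformlyOn_iff.2 fun ε hε => ?_ <;>
    filter_upwards [hsmall ε hε] with m hm x hx <;> rw [dist_comm, Real.dist_eq]
  · exact (hP m x hx).1.trans hm
  · exact (hP m x hx).2.trans hm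

namespace Matrix

open scoped Norms.L2Operator MatrixOrder

lemma IsHermitian.add_smul {n : Type*} {A C : Matrix n n ℝ} (hA : A.IsHermitian)
    (hC : C.IsHermitian) (t : ℝ) : (A + t • C).IsHermitian :=
  hA.add (hC.smul (IsSelfAdjoint.all t))

variable {n : Type*} [Fintype n] [DecidableEq n]

lemma PosDef.mul_mul_same_of_isHermitian {M S : Matrix n n ℝ} (hM : M.PosDef)
    (hS : S.IsHermitian) (hSu : IsUnit S) : (S * M * S).PosDef := by
  have := hM.conjTranspose_mul_mul_same (mulVec_injective_iff_isUnit.2 hSu)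
  rwa [hS.eq] at this

lemma continuousOn_spectrum_real (f : ℝ → ℝ) (A : Matrix n n ℝ) :
    ContinuousOn f (spectrum ℝ A) :=
  A.finite_real_spectrum.continuousOn f

lemma _root_.HasDerivAt.matrix_trace {F : ℝ → Matrix n n ℝ} {F' : Matrix n n ℝ} {t : ℝ}
    (h : HasDerivAt F F' t) : HasDerivAt (fun s => trace (F s)) (trace F') t :=
  (traceLinearMap n ℝ ℝ).toContinuousLinearMap.hasFDerivAt.comp_hasDerivAt t h

lemma _root_.HasDerivAt.matrix_trace_pow {X : ℝ → Matrix n n ℝ} {X' : Matrix n n ℝ} {t : ℝ}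
    (h : HasDerivAt X X' t) (k : ℕ) :
    HasDerivAt (fun s => trace (X s ^ k)) (k * trace (X t ^ (k - 1) * X')) t := by
  convert (h.fun_pow' k).matrix_trace using 1
  have hterm : ∀ i ∈ Finset.range k,
      trace (X t ^ (k.pred - i) * X' * X t ^ i) = trace (X t ^ (k - 1) * X') := by
    intro i hi
    rw [trace_mul_cycle, ← pow_add, Nat.pred_eq_sub_one,
      Nat.add_sub_of_le (by have := Finset.mem_range.1 hi; omega)]
  rw [trace_sum, Finset.sum_congr rfl hterm, Finset.sum_const, Finset.card_range, nsmul_eq_mul]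

lemma _root_.HasDerivAt.matrix_trace_aeval {X : ℝ → Matrix n n ℝ} {X' : Matrix n n ℝ} {t : ℝ}
    (h : HasDerivAt X X' t) (q : ℝ[X]) :
    HasDerivAt (fun s => trace (aeval (X s) q)) (trace (aeval (X t) (derivative q) * X')) t := by
  induction q using Polynomial.induction_on' with
  | add p q hp hq =>
    simp only [map_add, trace_add, add_mul]
    exact hp.fun_add hq
  | monomial k a =>
    simp only [aeval_monomial, derivative_monomial, Algebra.algebraMap_eq_smul_one, smul_mul_assoc,
      one_mul, trace_smul, smul_eq_mul]
    exact ((h.matrix_trace_pow k).const_mul a).congr_deriv (by ring)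

lemma tendstoUniformlyOn_cfc {ι : Type*} {l : Filter ι} {F : ι → ℝ → ℝ} {f : ℝ → ℝ} {K : Set ℝ}
    (hF : TendstoUniformlyOn F f l K) :
    TendstoUniformlyOn (fun i X => cfc (F i) X) (cfc f)
      l {X : Matrix n n ℝ | X.IsHermitian ∧ spectrum ℝ X ⊆ K} := by
  rw [Metric.tendstoUniformlyOn_iff] at hF ⊢
  intro ε hε
  filter_upwards [hF ε hε] with i hi X ⟨hX, hXK⟩
  rw [dist_eq_norm, ← cfc_sub f (F i) X (continuousOn_spectrum_real _ _)
    (continuousOn_spectrum_real _ _)]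
  exact norm_cfc_lt hε fun x hx => by simpa [dist_eq_norm] using hi x (hXK hx)

lemma IsHermitian.spectrum_add_subset_Icc {X E : Matrix n n ℝ} (hX : X.IsHermitian)
    (hE : E.IsHermitian) {a b c : ℝ} (hXab : spectrum ℝ X ⊆ Icc a b)
    (hEc : spectrum ℝ E ⊆ Icc (-c) c) : spectrum ℝ (X + E) ⊆ Icc (a - c) (b + c) := by
  have hXE := (hX.add hE).isSelfAdjoint
  have lower : algebraMap ℝ _ (a - c) ≤ X + E := by
    rw [sub_eq_add_neg, map_add]
    exact add_le_add ((algebraMap_le_iff_le_spectrum hX.isSelfAdjoint).2 fun y hy => (hXab hy).1)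
      ((algebraMap_le_iff_le_spectrum hE.isSelfAdjoint).2 fun y hy => (hEc hy).1)
  have upper : X + E ≤ algebraMap ℝ _ (b + c) := by
    rw [map_add]
    exact add_le_add ((le_algebraMap_iff_spectrum_le hX.isSelfAdjoint).2 fun y hy => (hXab hy).2)
      ((le_algebraMap_iff_spectrum_le hE.isSelfAdjoint).2 fun y hy => (hEc hy).2)
  exact fun x hx => ⟨(algebraMap_le_iff_le_spectrum hXE).1 lower x hx,
    (le_algebraMap_iff_spectrum_le hXE).1 upper x hx⟩

/-- The factor `‖1‖` cannot be dropped: it is `0` when `n` is empty. -/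
lemma spectrum_subset_Icc_norm (E : Matrix n n ℝ) :
    spectrum ℝ E ⊆ Icc (-(‖E‖ * ‖(1 : Matrix n n ℝ)‖)) (‖E‖ * ‖(1 : Matrix n n ℝ)‖) := by
  intro x hx
  simpa [abs_le] using spectrum.subset_closedBall_norm_mul E hx

lemma PosDef.eventually_spectrum_subset_Icc {α : Type*} {l : Filter α} {X : α → Matrix n n ℝ}
    {X₀ : Matrix n n ℝ} (hX₀ : X₀.PosDef) (hX : ∀ x, (X x).IsHermitian)
    (hlim : Tendsto X l (𝓝 X₀)) :
    ∃ a b, 0 < a ∧ ∀ᶠ x in l, spectrum ℝ (X x) ⊆ Icc a b := by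
  obtain ⟨r, hr0, hr⟩ := (finite_singleton (0 : ℝ)).exists_between' X₀.finite_real_spectrum
    fun _ h y hy => (mem_singleton_iff.1 h) ▸ hX₀.isStrictlyPositive.spectrum_pos hy
  obtain ⟨R, hR⟩ := X₀.finite_real_spectrum.bddAbove
  have hsmall : ∀ᶠ x in l, ‖X x - X₀‖ * ‖(1 : Matrix n n ℝ)‖ < r / 2 := by
    have := (tendsto_iff_norm_sub_tendsto_zero.1 hlim).mul_const ‖(1 : Matrix n n ℝ)‖
    rw [zero_mul] at this
    exact this.eventually (eventually_lt_nhds (half_pos (hr0 0 rfl)))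
  refine ⟨r / 2, R + r / 2, half_pos (hr0 0 rfl), hsmall.mono fun x hx => ?_⟩
  have hwin := hX₀.1.spectrum_add_subset_Icc ((hX x).sub hX₀.1)
    (fun y hy => ⟨(hr y hy).le, hR hy⟩) (spectrum_subset_Icc_norm _)
  rw [add_sub_cancel] at hwin
  exact hwin.trans (Icc_subset_Icc (by linarith) (by linarith))

theorem hasDerivAt_trace_cfc_add_smul {A C : Matrix n n ℝ} (hA : A.IsHermitian)
    (hC : C.IsHermitian) {t₀ a b : ℝ} (hspec : ∀ᶠ t in 𝓝 t₀, spectrum ℝ (A + t • C) ⊆ Icc a b)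
    {f f' : ℝ → ℝ} (hf : ∀ x ∈ Icc a b, HasDerivWithinAt f (f' x) (Icc a b) x)
    (hf' : ContinuousOn f' (Icc a b)) :
    HasDerivAt (fun t => trace (cfc f (A + t • C))) (trace (cfc f' (A + t₀ • C) * C)) t₀ := by
  obtain ⟨P, hP, hP'⟩ := exists_polynomial_tendstoUniformlyOn hf hf'
  let line : ℝ → Matrix n n ℝ := fun t => A + t • C
  have hs : line ⁻¹' {X | X.IsHermitian ∧ spectrum ℝ X ⊆ Icc a b} ∈ 𝓝 t₀ :=
    hspec.mono fun t ht => ⟨hA.add_smul hC t, ht⟩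
  let traceCLM : Matrix n n ℝ →L[ℝ] ℝ := (traceLinearMap n ℝ ℝ).toContinuousLinearMap
  let traceMulC : Matrix n n ℝ →L[ℝ] ℝ :=
    (traceLinearMap n ℝ ℝ ∘ₗ LinearMap.mulRight ℝ C).toContinuousLinearMap
  have hunif := traceMulC.uniformContinuous.comp_tendstoUniformlyOn
    ((tendstoUniformlyOn_cfc hP').comp line)
  have hpoint := traceCLM.uniformContinuous.comp_tendstoUniformlyOn
    ((tendstoUniformlyOn_cfc hP).comp line)
  refine hasDerivAt_of_tendstoUniformlyOnFilter
    (hunif.tendstoUniformlyOnFilter.mono_right (le_principal_iff.2 hs))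
    (Eventually.of_forall fun mt => ?_) (eventually_of_mem hs fun t ht => hpoint.tendsto_at ht)
  have hline : HasDerivAt line C mt.2 := by
    simpa [line] using ((hasDerivAt_id mt.2).smul_const C).const_add A
  have hpoly (q : ℝ[X]) (t : ℝ) : cfc (fun x => q.eval x) (line t) = aeval (line t) q :=
    cfc_polynomial q _ (hA.add_smul hC t).isSelfAdjoint
  simp only [Function.comp_def, hpoly]
  exact hline.matrix_trace_aeval (P mt.1)

theorem hasDerivAt_trace_cfc_add_smul_of_posDef {A C : Matrix n n ℝ} (hA : A.IsHermitian)
    (hC : C.IsHermitian) {t₀ : ℝ} (hX₀ : (A + t₀ • C).PosDef) {f f' : ℝ → ℝ}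
    (hf : ∀ x, 0 < x → HasDerivAt f (f' x) x) (hf' : ContinuousOn f' (Ioi 0)) :
    HasDerivAt (fun t => trace (cfc f (A + t • C))) (trace (cfc f' (A + t₀ • C) * C)) t₀ := by
  obtain ⟨a, b, ha, hspec⟩ := hX₀.eventually_spectrum_subset_Icc (hA.add_smul hC)
    ((continuous_const.add (continuous_id.smul continuous_const)).tendsto t₀)
  have hpos : Icc a b ⊆ Ioi 0 := fun x hx => ha.trans_le hx.1
  exact hasDerivAt_trace_cfc_add_smul hA hC hspec
    (fun x hx => (hf x (hpos hx)).hasDerivWithinAt) (hf'.mono hpos)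

lemma cfc_log_div_self {X : Matrix n n ℝ} (hX : X.PosDef) :
    cfc (fun x => Real.log x / x) X = cfc Real.log X * X⁻¹ := by
  simp_rw [div_eq_mul_inv]
  rw [cfc_mul _ _ X (continuousOn_spectrum_real _ _) (continuousOn_spectrum_real _ _),
    nonsing_inv_eq_ringInverse]
  exact congrArg _ (cfc_ringInverse_id (R := ℝ) X hX.isUnit)

end Matrix

lemma sum_update_smul {ι R M : Type*} [Fintype ι] [DecidableEq ι] [Ring R] [AddCommGroup M]
    [Module R M] (α : ι → R) (v : ι → M) (p : ι) (t : R) :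
    ∑ i, Function.update α p t i • v i = ∑ i, α i • v i + (t - α p) • v p := by
  rw [← Finset.add_sum_erase _ _ (Finset.mem_univ p), ← Finset.add_sum_erase _ _ (Finset.mem_univ p),
    Function.update_self, Finset.sum_congr rfl fun i hi => by
      rw [Function.update_of_ne (Finset.ne_of_mem_erase hi)], sub_smul]
  abel

lemma hasDerivAt_log_sq_div_two {x : ℝ} (hx : x ≠ 0) :
    HasDerivAt (fun x => Real.log x ^ 2 / 2) (Real.log x / x) x :=
  (((Real.hasDerivAt_log hx).pow 2).div_const 2).congr_deriv (by field_simp; norm_num)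

lemma continuousOn_log_div_self : ContinuousOn (fun x => Real.log x / x) (Ioi 0) :=
  (Real.continuousOn_log.mono fun _ hx => ne_of_gt hx).div continuousOn_id fun _ hx => ne_of_gt hx

lemma fnorm_sq {d : ℕ} (M : Matrix (Fin d) (Fin d) ℝ) : fnorm M ^ 2 = trace (Mᵀ * M) :=
  Real.sq_sqrt (by simpa using (posSemidef_conjTranspose_mul_self M).trace_nonneg)

lemma half_mul_fnorm_mlog_sq {d : ℕ} {Y : Matrix (Fin d) (Fin d) ℝ} (hY : Y.IsHermitian) :
    1 / 2 * fnorm (mlog Y) ^ 2 = trace (cfc (fun x => Real.log x ^ 2 / 2) Y) := by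
  have hsymm : (mlog Y)ᵀ = mlog Y := by
    rw [← conjTranspose_eq_transpose_of_trivial]
    exact cfc_predicate Real.log Y
  have hhalf : (fun x => Real.log x ^ 2 / 2) = fun x => 2⁻¹ * Real.log x ^ 2 := by
    funext x
    ring
  rw [fnorm_sq, hsymm, ← sq, mlog, ← cfc_pow _ _ _ (continuousOn_spectrum_real _ _) hY.isSelfAdjoint,
    hhalf, cfc_const_mul _ _ _ (continuousOn_spectrum_real _ _), trace_smul, smul_eq_mul]
  ring

theorem stmt_17_general {d n : ℕ} (S : Matrix (Fin d) (Fin d) ℝ) (hS : S.PosDef)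
    (B : Fin n → Matrix (Fin d) (Fin d) ℝ) (hB : ∀ i, (B i).PosDef)
    (lam : ℝ) (α : Fin n → ℝ)
    (hα : (∑ i, α i • B i).PosDef) (p : Fin n) :
    HasDerivAt
      (fun t : ℝ =>
        (1/2) * (fnorm (mlog (S * (∑ i, Function.update α p t i • B i) * S)))^2 +
          lam * ∑ i, Function.update α p t i)
      (Matrix.trace (mlog (S * (∑ i, α i • B i) * S) *
        (S * (∑ i, α i • B i) * S)⁻¹ * S * B p * S) + lam) (α p) := by
  set M := ∑ i, α i • B i
  set C := S * B p * S
  have hX₀ : (S * M * S).PosDef := hα.mul_mul_same_of_isHermitian hS.1 hS.isUnit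
  have hC : C.IsHermitian := ((hB p).mul_mul_same_of_isHermitian hS.1 hS.isUnit).1
  have hA : (S * M * S - α p • C).IsHermitian := hX₀.1.sub (hC.smul (IsSelfAdjoint.all _))
  have hpath (t : ℝ) : S * (∑ i, Function.update α p t i • B i) * S =
      S * M * S - α p • C + t • C := by
    rw [sum_update_smul, mul_add, add_mul, mul_smul_comm, smul_mul_assoc, sub_smul]
    abel
  have hlog := hasDerivAt_trace_cfc_add_smul_of_posDef hA hC (t₀ := α p)
    (by rwa [sub_add_cancel]) (fun x hx => hasDerivAt_log_sq_div_two hx.ne')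
    continuousOn_log_div_self
  have hlam : HasDerivAt (fun t => lam * ∑ i, Function.update α p t i) lam (α p) := by
    simp only [Finset.sum_update_of_mem (Finset.mem_univ p)]
    simpa using ((hasDerivAt_id (α p)).add_const _).const_mul lam
  have hsum := hlog.add hlam
  rw [sub_add_cancel, cfc_log_div_self hX₀] at hsum
  refine (hsum.congr_deriv (by simp only [C, mlog, mul_assoc])).congr_of_eventuallyEq
    (.of_forall fun t => ?_)
  dsimp only [Pi.add_apply]
  rw [hpath, half_mul_fnorm_mlog_sq (hA.add_smul hC t)]

theorem stmt_17 {d n : ℕ} (S : Matrix (Fin d) (Fin d) ℝ) (hS : S.PosDef)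
    (B : Fin n → Matrix (Fin d) (Fin d) ℝ) (hB : ∀ i, (B i).PosDef)
    (lam : ℝ) (hlam : 0 ≤ lam) (α : Fin n → ℝ)
    (hα : (∑ i, α i • B i).PosDef) (p : Fin n) :
    HasDerivAt
      (fun t : ℝ =>
        (1/2) * (fnorm (mlog (S * (∑ i, Function.update α p t i • B i) * S)))^2 +
          lam * ∑ i, Function.update α p t i)
      (Matrix.trace (mlog (S * (∑ i, α i • B i) * S) *
        (S * (∑ i, α i • B i) * S)⁻¹ * S * B p * S) + lam) (α p) :=
  stmt_17_general S hS B hB lam α hα p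
end
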